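/- Let ε > 0. For every k ∈ ℝ² with k ≠ 0, ∫_{ℝ²} (1/(2π‖y‖)) Erfc(‖y‖/ε) e^{−i k·y} dy = (1/κ) Erf(κ ε/2), where κ = ‖k‖. (This is the Fourier transform of the residual U − U^ε for the 2D Coulomb kernel U(r) = 1/(2πr) with far-field smooth approximation U^ε(r) = Erf(r/ε)/(2πr).) -/

import Mathlib

open MeasureTheory Set
open scoped RealInnerProductSpace

/-- The error function `Erf(x) = (2/√π) ∫₀ˣ e^{-t²} dt`. -/
noncomputable def erf (x : ℝ) : ℝ :=
  (2 / Real.sqrt Real.pi) * ∫ t in (0:ℝ)..x, Real.exp (-t ^ 2)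

/-- The complementary error function `Erfc(x) = 1 - Erf(x)`. -/
noncomputable def erfc (x : ℝ) : ℝ := 1 - erf x

lemma gauss_integrable : MeasureTheory.Integrable (fun t : ℝ => Real.exp (-t ^ 2)) := by
  simpa using integrable_exp_neg_mul_sq one_pos

lemma gauss_Ioi_zero : ∫ t in Ioi (0:ℝ), Real.exp (-t ^ 2) = Real.sqrt Real.pi / 2 := by
  simpa using integral_gaussian_Ioi 1

lemma erfc_eq_integral_Ioi {x : ℝ} (hx : 0 ≤ x) :
    erfc x = (2 / Real.sqrt Real.pi) * ∫ t in Ioi x, Real.exp (-t ^ 2) := by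
  have hsplit : (∫ t in Ioc (0:ℝ) x, Real.exp (-t ^ 2)) + ∫ t in Ioi x, Real.exp (-t ^ 2)
      = ∫ t in Ioi (0:ℝ), Real.exp (-t ^ 2) := by
    rw [← MeasureTheory.setIntegral_union (Ioc_disjoint_Ioi le_rfl) measurableSet_Ioi
      gauss_integrable.integrableOn gauss_integrable.integrableOn,
      Ioc_union_Ioi_eq_Ioi hx]
  have h0x : (∫ t in (0:ℝ)..x, Real.exp (-t ^ 2)) = ∫ t in Ioc (0:ℝ) x, Real.exp (-t ^ 2) :=
    intervalIntegral.integral_of_le hx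
  have hπ : Real.sqrt Real.pi ≠ 0 := by positivity
  rw [gauss_Ioi_zero] at hsplit
  unfold erfc erf
  rw [h0x]
  field_simp
  linarith [hsplit]

lemma coulomb_residual_rep {ε r : ℝ} (hε : 0 < ε) (hr : 0 < r) :
    1 / (2 * Real.pi * r) * erfc (r / ε)
      = (Real.pi * Real.sqrt Real.pi)⁻¹ * ∫ s in Ioi ε⁻¹, Real.exp (-(s ^ 2 * r ^ 2)) := by
  have hx : (0:ℝ) ≤ r / ε := by positivity
  have hscale : (∫ s in Ioi ε⁻¹, Real.exp (-(r * s) ^ 2))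
      = r⁻¹ * ∫ t in Ioi (r * ε⁻¹), Real.exp (-t ^ 2) := by
    simpa using integral_comp_mul_left_Ioi (fun t => Real.exp (-t ^ 2)) ε⁻¹ hr
  have hre : r * ε⁻¹ = r / ε := by rw [div_eq_mul_inv]
  have hcong : (∫ s in Ioi ε⁻¹, Real.exp (-(r * s) ^ 2))
      = ∫ s in Ioi ε⁻¹, Real.exp (-(s ^ 2 * r ^ 2)) := by
    congr 1 with s; ring_nf
  rw [erfc_eq_integral_Ioi hx, ← hre, ← hcong, hscale]
  have hπ : Real.sqrt Real.pi ≠ 0 := by positivity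
  have hπ' : Real.pi ≠ 0 := Real.pi_ne_zero
  field_simp

lemma outer_subst {κ ε : ℝ} (hκ : 0 < κ) (hε : 0 < ε) :
    ∫ s in Ioi ε⁻¹, (s ^ 2)⁻¹ * Real.exp (-(κ ^ 2 / (4 * s ^ 2)))
      = (2 / κ) * ∫ t in (0:ℝ)..(κ * ε / 2), Real.exp (-t ^ 2) := by
  set f : ℝ → ℝ := fun x => κ / 2 * x⁻¹ with hf
  have hεi : (0:ℝ) < ε⁻¹ := by positivity
  have himg : f '' Ioi ε⁻¹ = Ioo 0 (κ * ε / 2) := by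
    ext t
    constructor
    · rintro ⟨x, hx, rfl⟩
      have hx0 : 0 < x := hεi.trans hx
      refine ⟨by positivity, ?_⟩
      have h1 : x⁻¹ < ε := by rwa [inv_lt_comm₀ hx0 hε]
      calc κ / 2 * x⁻¹ < κ / 2 * ε := mul_lt_mul_of_pos_left h1 (by positivity)
        _ = κ * ε / 2 := by ring
    · rintro ⟨ht0, htc⟩
      refine ⟨κ / 2 * t⁻¹, ?_, ?_⟩
      · have h1 : t < κ / 2 * ε := by linarith [htc]
        have h2 : ε⁻¹ * t < ε⁻¹ * (κ / 2 * ε) := mul_lt_mul_of_pos_left h1 hεi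
        have h3 : ε⁻¹ * (κ / 2 * ε) = κ / 2 := by field_simp
        rw [mem_Ioi, show κ / 2 * t⁻¹ = (κ / 2) / t by ring, lt_div_iff₀ ht0]
        linarith
      · simp only [hf]
        field_simp
  have hderiv : ∀ x ∈ Ioi ε⁻¹, HasDerivWithinAt f (κ / 2 * (-(x ^ 2)⁻¹)) (Ioi ε⁻¹) x := by
    intro x hx
    have hx0 : x ≠ 0 := (hεi.trans hx).ne'
    exact ((hasDerivAt_inv hx0).const_mul (κ / 2)).hasDerivWithinAt
  have hinj : InjOn f (Ioi ε⁻¹) := by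
    intro x hx y hy hxy
    have hκ2 : κ / 2 ≠ 0 := by positivity
    exact inv_injective (mul_left_cancel₀ hκ2 hxy)
  have hsub := integral_image_eq_integral_abs_deriv_smul measurableSet_Ioi hderiv hinj
    (fun t => Real.exp (-t ^ 2))
  rw [himg] at hsub
  have hIoo : (∫ t in (0:ℝ)..(κ * ε / 2), Real.exp (-t ^ 2))
      = ∫ t in Ioo (0:ℝ) (κ * ε / 2), Real.exp (-t ^ 2) := by
    rw [intervalIntegral.integral_of_le (by positivity), integral_Ioc_eq_integral_Ioo]
  have hcalc : (∫ x in Ioi ε⁻¹, |κ / 2 * -(x ^ 2)⁻¹| • Real.exp (-f x ^ 2))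
      = (κ / 2) * ∫ s in Ioi ε⁻¹, (s ^ 2)⁻¹ * Real.exp (-(κ ^ 2 / (4 * s ^ 2))) := by
    rw [← MeasureTheory.integral_const_mul]
    refine setIntegral_congr_fun measurableSet_Ioi ?_
    intro x hx
    have hx0 : (0:ℝ) < x := hεi.trans hx
    have h1 : |κ / 2 * -(x ^ 2)⁻¹| = κ / 2 * (x ^ 2)⁻¹ := by
      rw [abs_mul, abs_neg, abs_inv, abs_of_pos (by positivity : (0:ℝ) < κ / 2),
        abs_of_pos (by positivity : (0:ℝ) < x ^ 2)]
    have h2 : f x ^ 2 = κ ^ 2 / (4 * x ^ 2) := by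
      simp only [hf]
      field_simp
      ring
    simp only [smul_eq_mul]
    rw [h1, h2]
    ring
  rw [hIoo, hsub, hcalc, ← mul_assoc]
  field_simp
  congr 1 with s
  rw [mul_comm (s ^ 2) 4]

open Complex in
lemma key_inner (k : EuclideanSpace ℝ (Fin 2)) {s : ℝ} (hs : 0 < s) :
    ∫ y : EuclideanSpace ℝ (Fin 2),
        Complex.exp (-(s : ℂ) ^ 2 * (‖y‖ : ℂ) ^ 2 + (-Complex.I) * (⟪k, y⟫ : ℝ))
      = ((Real.pi : ℂ) / (s : ℂ) ^ 2) * Complex.exp (-((‖k‖ : ℂ)) ^ 2 / (4 * (s : ℂ) ^ 2)) := by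
  have hb : 0 < ((s : ℂ) ^ 2).re := by
    norm_cast
    positivity
  have := GaussianFourier.integral_cexp_neg_mul_sq_norm_add (V := EuclideanSpace ℝ (Fin 2)) hb (-Complex.I) k
  rw [this]
  have hrank : (Module.finrank ℝ (EuclideanSpace ℝ (Fin 2)) : ℂ) / 2 = 1 := by
    rw [finrank_euclideanSpace_fin]
    norm_num
  rw [hrank, Complex.cpow_one]
  congr 1
  have : (-Complex.I) ^ 2 = -1 := by
    simp [pow_two]
  rw [this]
  push_cast
  ring

lemma my_integral_ofReal {X : Type*} [MeasurableSpace X] {μ : Measure X} (f : X → ℝ) :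
    ∫ x, ((f x : ℝ) : ℂ) ∂μ = ((∫ x, f x ∂μ : ℝ) : ℂ) := integral_ofReal

/-- Fourier transform of the residual `U - U^ε` of the 2D Coulomb kernel:
`∫_{ℝ²} (1/(2π‖y‖)) Erfc(‖y‖/ε) e^{-i k·y} dy = (1/κ) Erf(κε/2)`, `κ = ‖k‖ ≠ 0`. -/
theorem fourier_residual_coulomb_2d
    (ε : ℝ) (hε : 0 < ε) (k : EuclideanSpace ℝ (Fin 2)) (hk : k ≠ 0) :
    ∫ y : EuclideanSpace ℝ (Fin 2),
        ((1 / (2 * Real.pi * ‖y‖) * erfc (‖y‖ / ε) : ℝ) : ℂ) *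
          Complex.exp (-Complex.I * (⟪k, y⟫ : ℝ)) =
      ((1 / ‖k‖ * erf (‖k‖ * ε / 2) : ℝ) : ℂ) := by
  have hκ : 0 < ‖k‖ := norm_pos_iff.mpr hk
  have hεi : (0:ℝ) < ε⁻¹ := by positivity
  set G : ℝ → EuclideanSpace ℝ (Fin 2) → ℂ := fun s y =>
    Complex.exp (-(s : ℂ) ^ 2 * (‖y‖ : ℂ) ^ 2 + (-Complex.I) * (⟪k, y⟫ : ℝ)) with hG
  -- continuity / measurability
  have hcont : Continuous (Function.uncurry G) := by
    apply Complex.continuous_exp.comp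
    apply Continuous.add
    · fun_prop
    · exact continuous_const.mul
        (Complex.continuous_ofReal.comp ((continuous_const.inner continuous_id).comp
          continuous_snd))
  have hmeas : AEStronglyMeasurable (Function.uncurry G)
      (((volume : Measure ℝ).restrict (Ioi ε⁻¹)).prod volume) :=
    hcont.aestronglyMeasurable
  -- norm of G
  have hnorm : ∀ s (y : EuclideanSpace ℝ (Fin 2)),
      ‖G s y‖ = Real.exp (-s ^ 2 * ‖y‖ ^ 2) := by
    intro s y
    rw [hG]
    have hz : (-(s : ℂ) ^ 2 * (‖y‖ : ℂ) ^ 2 + (-Complex.I) * ((⟪k, y⟫ : ℝ) : ℂ))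
        = ((-s ^ 2 * ‖y‖ ^ 2 : ℝ) : ℂ) + (-Complex.I) * ((⟪k, y⟫ : ℝ) : ℂ) := by
      push_cast; ring
    simp only [hz, Complex.norm_exp, Complex.add_re, Complex.mul_re,
      Complex.ofReal_re, Complex.ofReal_im, Complex.neg_re, Complex.neg_im, Complex.I_re,
      Complex.I_im]
    norm_num
  -- integrability on the product
  have hint : Integrable (Function.uncurry G)
      (((volume : Measure ℝ).restrict (Ioi ε⁻¹)).prod volume) := by
    rw [integrable_prod_iff hmeas]
    constructor
    · filter_upwards [ae_restrict_mem measurableSet_Ioi] with s hs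
      have hs0 : 0 < s := hεi.trans hs
      have hb : 0 < ((s : ℂ) ^ 2).re := by norm_cast; positivity
      exact GaussianFourier.integrable_cexp_neg_mul_sq_norm_add hb (-Complex.I) k
    · have hbig : Integrable (fun s : ℝ => Real.pi * s ^ (-2 : ℝ))
          ((volume : Measure ℝ).restrict (Ioi ε⁻¹)) :=
        (integrableOn_Ioi_rpow_of_lt (by norm_num) hεi).const_mul Real.pi
      apply hbig.congr
      filter_upwards [ae_restrict_mem measurableSet_Ioi] with s hs
      have hs0 : 0 < s := hεi.trans hs
      have h1 : ∀ y : EuclideanSpace ℝ (Fin 2),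
          ‖Function.uncurry G (s, y)‖ = Real.exp (-s ^ 2 * ‖y‖ ^ 2) := fun y => hnorm s y
      simp only [Function.uncurry] at h1 ⊢
      rw [funext h1,
        GaussianFourier.integral_rexp_neg_mul_sq_norm (show (0:ℝ) < s ^ 2 by positivity),
        finrank_euclideanSpace_fin]
      rw [show ((2:ℕ):ℝ) / 2 = 1 by norm_num, Real.rpow_one,
        show (-2:ℝ) = -((2:ℕ):ℝ) by norm_num, Real.rpow_neg hs0.le, Real.rpow_natCast]
      field_simp
  -- step 1: rewrite the integrand a.e. as an inner integral
  have h0 : ∀ᵐ y : EuclideanSpace ℝ (Fin 2) ∂volume, y ≠ 0 := by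
    refine ae_iff.mpr ?_
    simp only [ne_eq, not_not, setOf_eq_eq_singleton]
    exact measure_singleton 0
  have step1 : (∫ y : EuclideanSpace ℝ (Fin 2),
        ((1 / (2 * Real.pi * ‖y‖) * erfc (‖y‖ / ε) : ℝ) : ℂ) *
          Complex.exp (-Complex.I * (⟪k, y⟫ : ℝ)))
      = ∫ y : EuclideanSpace ℝ (Fin 2),
          (((Real.pi * Real.sqrt Real.pi)⁻¹ : ℝ) : ℂ) * ∫ s in Ioi ε⁻¹, G s y := by
    refine integral_congr_ae ?_
    filter_upwards [h0] with y hy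
    have hr : 0 < ‖y‖ := norm_pos_iff.mpr hy
    rw [coulomb_residual_rep hε hr, Complex.ofReal_mul, mul_assoc]
    congr 1
    have hinner : (∫ s in Ioi ε⁻¹, G s y)
        = (↑(∫ s in Ioi ε⁻¹, Real.exp (-(s ^ 2 * ‖y‖ ^ 2))) : ℂ) *
            Complex.exp (-Complex.I * (⟪k, y⟫ : ℝ)) := by
      rw [← my_integral_ofReal, ← integral_mul_const]
      refine setIntegral_congr_fun measurableSet_Ioi fun s _ => ?_
      rw [hG]
      simp only
      rw [Complex.ofReal_exp, ← Complex.exp_add]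
      congr 1
      push_cast
      ring
    rw [hinner]
  rw [step1, MeasureTheory.integral_const_mul, ← MeasureTheory.integral_integral_swap hint]
  -- step 3: evaluate the inner Gaussian Fourier integral
  have step3 : (∫ s in Ioi ε⁻¹, ∫ y : EuclideanSpace ℝ (Fin 2), G s y)
      = ∫ s in Ioi ε⁻¹,
          ((Real.pi : ℂ) / (s : ℂ) ^ 2) * Complex.exp (-((‖k‖ : ℂ)) ^ 2 / (4 * (s : ℂ) ^ 2)) :=
    setIntegral_congr_fun measurableSet_Ioi fun s hs => key_inner k (hεi.trans hs)
  rw [step3]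
  -- step 4: turn it into a real integral
  have step4 : (∫ s in Ioi ε⁻¹,
        ((Real.pi : ℂ) / (s : ℂ) ^ 2) * Complex.exp (-((‖k‖ : ℂ)) ^ 2 / (4 * (s : ℂ) ^ 2)))
      = ((∫ s in Ioi ε⁻¹, Real.pi * ((s ^ 2)⁻¹ * Real.exp (-(‖k‖ ^ 2 / (4 * s ^ 2)))) : ℝ) : ℂ) := by
    rw [← my_integral_ofReal]
    refine setIntegral_congr_fun measurableSet_Ioi fun s hs => ?_
    have hs0 : 0 < s := hεi.trans hs
    rw [Complex.ofReal_mul, Complex.ofReal_mul, Complex.ofReal_exp]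
    have hexp : ((-(‖k‖ ^ 2 / (4 * s ^ 2)) : ℝ) : ℂ) = -(‖k‖ : ℂ) ^ 2 / (4 * (s : ℂ) ^ 2) := by
      push_cast; ring
    have hinv : ((((s ^ 2)⁻¹ : ℝ)) : ℂ) = ((s : ℂ) ^ 2)⁻¹ := by push_cast; ring
    rw [hexp, hinv, div_eq_mul_inv, mul_assoc]
  rw [step4]
  -- step 5: real computation
  rw [MeasureTheory.integral_const_mul, outer_subst hκ hε, ← Complex.ofReal_mul]
  norm_cast
  have hπ : Real.sqrt Real.pi ≠ 0 := by positivity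
  have hπ' : Real.pi ≠ 0 := Real.pi_ne_zero
  unfold erf
  field_simp
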